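/- If x ∈ K satisfies ⟨x - x*, Π_K(x, -∇_x L_A(x,v))⟩ + ⟨v - v*, Ax - b⟩ = 0 (i.e., the Lyapunov derivative vanishes) where (x*,v*) is a saddle point, then Ax = b and f(x) = f(x*); hence x is also an optimal solution. -/

import Mathlib

/-! The projection `p` of `w = -∇ₓL_A(x,v)` onto the closed convex cone `T_K(x)` satisfies
`⟪w - p, c⟫ ≤ 0` for every `c ∈ T_K(x)`; taking `c = x* - x` gives `⟪x - x*, p⟫ ≤ ⟪x - x*, w⟫`.
Bounding `⟪∇f x, x* - x⟫` by convexity turns the vanishing Lyapunov derivative into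
`0 ≤ L(x*,v) - L(x,v*) - ‖Ax - b‖²`, and the saddle point inequality `L(x*,v) ≤ L(x,v*)` forces
`Ax = b` and `L(x*,v) = L(x,v*)`, i.e. `f x = f x*`. -/

open scoped Pointwise RealInnerProductSpace

section
variable {E : Type*} [AddCommGroup E] [Module ℝ E] {K : Set E} {x : E}

/-- The closure of this cone is the tangent cone `T_K(x)`. -/
def Convex.feasibleCone (hK : Convex ℝ K) (hx : x ∈ K) : PointedCone ℝ E :=
  .ofConeComb {d | ∃ y ∈ K, ∃ l : ℝ, 0 ≤ l ∧ d = l • (y - x)} ⟨0, x, hx, 0, le_rfl, by simp⟩ <| by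
    rintro _ ⟨y₁, hy₁, l₁, hl₁, rfl⟩ _ ⟨y₂, hy₂, l₂, hl₂, rfl⟩ a ha b hb
    have hmem : a • l₁ • (y₁ - x) + b • l₂ • (y₂ - x) ∈
        (a * l₁ + b * l₂) • ((fun y => -x + y) '' K) := by
      rw [(hK.translate (-x)).add_smul (by positivity) (by positivity), smul_smul, smul_smul]
      refine Set.add_mem_add (Set.smul_mem_smul_set ⟨y₁, hy₁, ?_⟩)
        (Set.smul_mem_smul_set ⟨y₂, hy₂, ?_⟩) <;> exact neg_add_eq_sub _ _
    obtain ⟨_, ⟨y, hy, rfl⟩, hd⟩ := hmem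
    exact ⟨y, hy, a * l₁ + b * l₂, by positivity, by simp only [← hd, neg_add_eq_sub]⟩

lemma Convex.sub_mem_feasibleCone (hK : Convex ℝ K) (hx : x ∈ K) {y : E} (hy : y ∈ K) :
    y - x ∈ hK.feasibleCone hx :=
  ⟨y, hy, 1, zero_le_one, (one_smul ℝ _).symm⟩
end

section
variable {E : Type*} [NormedAddCommGroup E] [NormedSpace ℝ E] {s : Set E} {f : E → ℝ}
  {f' : E →L[ℝ] ℝ} {x y : E}

lemma ConvexOn.add_le_of_hasFDerivAt (hf : ConvexOn ℝ s f) (hx : x ∈ s) (hy : y ∈ s)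
    (hf' : HasFDerivAt f f' x) : f x + f' (y - x) ≤ f y := by
  set ℓ : ℝ →ᵃ[ℝ] E := AffineMap.lineMap x y
  have hderiv : HasDerivAt (f ∘ ℓ) (f' (y - x)) 0 :=
    (AffineMap.lineMap_apply_zero (k := ℝ) x y ▸ hf').comp_hasDerivAt 0
      AffineMap.hasDerivAt_lineMap
  have := (hf.comp_affineMap ℓ).le_slope_of_hasDerivAt (by simpa [ℓ]) (by simpa [ℓ]) zero_lt_one
    hderiv
  simp only [slope_def_field, Function.comp_apply, ℓ, AffineMap.lineMap_apply_one,
    AffineMap.lineMap_apply_zero, sub_zero, div_one] at this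
  linarith
end

section
variable {E : Type*} [NormedAddCommGroup E] [InnerProductSpace ℝ E]

lemma ConvexOn.add_inner_le_of_hasGradientAt [CompleteSpace E] {s : Set E} {f : E → ℝ} {g x y : E}
    (hf : ConvexOn ℝ s f) (hx : x ∈ s) (hy : y ∈ s) (hg : HasGradientAt f g x) :
    f x + ⟪g, y - x⟫ ≤ f y :=
  hf.add_le_of_hasFDerivAt hx hy hg.hasFDerivAt

lemma Convex.inner_sub_le_zero_of_isMinOn {C : Set E} (hC : Convex ℝ C) {w p u : E} (hp : p ∈ C)
    (hmin : IsMinOn (fun u => ‖w - u‖) C p) (hu : u ∈ C) : ⟪w - p, u - p⟫ ≤ 0 := by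
  have : Nonempty C := ⟨⟨p, hp⟩⟩
  refine (norm_eq_iInf_iff_real_inner_le_zero hC hp).1 (le_antisymm ?_ ?_) u hu
  · exact le_ciInf fun v => isMinOn_iff.1 hmin v v.2
  · exact ciInf_le ⟨0, fun _ ⟨_, h⟩ => h ▸ norm_nonneg _⟩ (⟨p, hp⟩ : C)

lemma PointedCone.inner_sub_le_zero_of_isMinOn (C : PointedCone ℝ E) {w p c : E} (hp : p ∈ C)
    (hmin : IsMinOn (fun u => ‖w - u‖) C p) (hc : c ∈ C) : ⟪w - p, c⟫ ≤ 0 := by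
  simpa using C.convex.inner_sub_le_zero_of_isMinOn hp hmin (C.add_mem hp hc)
end

section
variable {E F : Type*} [NormedAddCommGroup E] [InnerProductSpace ℝ E] [CompleteSpace E]
  [NormedAddCommGroup F] [InnerProductSpace ℝ F] [CompleteSpace F]

/-- `-g - A†v - A†(Ax - b)` is `-∇ₓL_A(x,v)` for the augmented Lagrangian. -/
lemma lyapunov_derivative_le {f : E → ℝ} (hf : ConvexOn ℝ Set.univ f) {g x xs : E}
    (hg : HasGradientAt f g x) (A : E →L[ℝ] F) {b : F} (hfeas : A xs = b) (L : E → F → ℝ)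
    (hL : ∀ x v, L x v = f x + ⟪v, A x - b⟫) (v vs : F) :
    ⟪x - xs, -g - ContinuousLinearMap.adjoint A v - ContinuousLinearMap.adjoint A (A x - b)⟫
        + ⟪v - vs, A x - b⟫ ≤ L xs v - L x vs - ‖A x - b‖ ^ 2 := by
  have hconv : f x + ⟪g, xs - x⟫ ≤ f xs := hf.add_inner_le_of_hasGradientAt
    (Set.mem_univ x) (Set.mem_univ xs) hg
  have hA : A (x - xs) = A x - b := by rw [map_sub, hfeas]
  have hw : ⟪x - xs, -g - ContinuousLinearMap.adjoint A v
      - ContinuousLinearMap.adjoint A (A x - b)⟫ = ⟪g, xs - x⟫ - ⟪v, A x - b⟫ - ‖A x - b‖ ^ 2 := by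
    rw [inner_sub_right, inner_sub_right, inner_neg_right, ContinuousLinearMap.adjoint_inner_right,
      ContinuousLinearMap.adjoint_inner_right, hA, real_inner_self_eq_norm_sq,
      ← neg_sub xs x, inner_neg_left, real_inner_comm g, real_inner_comm v]
    ring
  rw [hw, hL, hL, hfeas, sub_self, inner_zero_right, inner_sub_left]
  linarith
end

theorem lyapunov_derivative_zero_implies_optimal_general (n m : ℕ)
    (K : Set (EuclideanSpace ℝ (Fin n))) (hK : Convex ℝ K)
    (f : EuclideanSpace ℝ (Fin n) → ℝ) (hf : ConvexOn ℝ Set.univ f)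
    (g : EuclideanSpace ℝ (Fin n) → EuclideanSpace ℝ (Fin n))
    (hg : ∀ x, HasGradientAt f (g x) x)
    (A : EuclideanSpace ℝ (Fin n) →L[ℝ] EuclideanSpace ℝ (Fin m))
    (b : EuclideanSpace ℝ (Fin m))
    (L : EuclideanSpace ℝ (Fin n) → EuclideanSpace ℝ (Fin m) → ℝ)
    (hL : ∀ x v, L x v = f x + ⟪v, A x - b⟫)
    (xs : EuclideanSpace ℝ (Fin n)) (vs : EuclideanSpace ℝ (Fin m)) (hxs : xs ∈ K)
    (hfeas : A xs = b)
    (hsaddle : ∀ x ∈ K, ∀ v, L xs v ≤ L xs vs ∧ L xs vs ≤ L x vs)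
    (x : EuclideanSpace ℝ (Fin n)) (hx : x ∈ K) (v : EuclideanSpace ℝ (Fin m))
    (p : EuclideanSpace ℝ (Fin n))
    -- `p = Π_K(x, -∇_x L_A(x,v))`, the metric projection onto the tangent cone `T_K(x)`
    (hpT : p ∈ closure {d | ∃ y ∈ K, ∃ l : ℝ, 0 ≤ l ∧ d = l • (y - x)})
    (hpmin : ∀ u ∈ closure {d | ∃ y ∈ K, ∃ l : ℝ, 0 ≤ l ∧ d = l • (y - x)},
      ‖(-(g x) - ContinuousLinearMap.adjoint A v
          - ContinuousLinearMap.adjoint A (A x - b)) - p‖ ≤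
        ‖(-(g x) - ContinuousLinearMap.adjoint A v
          - ContinuousLinearMap.adjoint A (A x - b)) - u‖)
    (hzero : ⟪x - xs, p⟫ + ⟪v - vs, A x - b⟫ = 0) :
    A x = b ∧ f x = f xs := by
  set w := -(g x) - ContinuousLinearMap.adjoint A v - ContinuousLinearMap.adjoint A (A x - b)
  have hproj : ⟪x - xs, p⟫ ≤ ⟪x - xs, w⟫ := by
    have := (hK.feasibleCone hx).closure.inner_sub_le_zero_of_isMinOn hpT (isMinOn_iff.2 hpmin)
      (subset_closure (hK.sub_mem_feasibleCone hx hxs))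
    rw [← neg_sub x xs, inner_neg_right, inner_sub_left, real_inner_comm] at this
    linarith [real_inner_comm p (x - xs)]
  have hbound := lyapunov_derivative_le hf (hg x) A hfeas L hL v vs
  obtain ⟨hmax_v, hmin_x⟩ := hsaddle x hx v
  have hres : ‖A x - b‖ ^ 2 = 0 := by linarith [sq_nonneg ‖A x - b‖]
  have hAx : A x = b := by simpa [sub_eq_zero] using hres
  refine ⟨hAx, ?_⟩
  have hgap : L xs v = L x vs := by linarith
  rwa [hL, hL, hfeas, hAx, sub_self, inner_zero_right, inner_zero_right, add_zero, add_zero,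
    eq_comm] at hgap

/-- If the Lyapunov derivative of the projected primal–dual gradient flow vanishes at
`(x, v)` with `x ∈ K`, where `(x*, v*)` is a saddle point of `L(x,v) = f(x) + ⟨v, Ax-b⟩`,
then `Ax = b` and `f(x) = f(x*)`; hence `x` is also an optimal solution. -/
theorem lyapunov_derivative_zero_implies_optimal (n m : ℕ)
    (K : Set (EuclideanSpace ℝ (Fin n))) (hKc : IsClosed K) (hK : Convex ℝ K)
    (f : EuclideanSpace ℝ (Fin n) → ℝ) (hf : ConvexOn ℝ Set.univ f)
    (g : EuclideanSpace ℝ (Fin n) → EuclideanSpace ℝ (Fin n))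
    (hg : ∀ x, HasGradientAt f (g x) x)
    (A : EuclideanSpace ℝ (Fin n) →L[ℝ] EuclideanSpace ℝ (Fin m))
    (b : EuclideanSpace ℝ (Fin m))
    (L : EuclideanSpace ℝ (Fin n) → EuclideanSpace ℝ (Fin m) → ℝ)
    (hL : ∀ x v, L x v = f x + ⟪v, A x - b⟫)
    (xs : EuclideanSpace ℝ (Fin n)) (vs : EuclideanSpace ℝ (Fin m)) (hxs : xs ∈ K)
    (hfeas : A xs = b)
    (hsaddle : ∀ x ∈ K, ∀ v, L xs v ≤ L xs vs ∧ L xs vs ≤ L x vs)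
    (x : EuclideanSpace ℝ (Fin n)) (hx : x ∈ K) (v : EuclideanSpace ℝ (Fin m))
    (p : EuclideanSpace ℝ (Fin n))
    -- `p = Π_K(x, -∇_x L_A(x,v))`, the metric projection onto the tangent cone `T_K(x)`
    (hpT : p ∈ closure {d | ∃ y ∈ K, ∃ l : ℝ, 0 ≤ l ∧ d = l • (y - x)})
    (hpmin : ∀ u ∈ closure {d | ∃ y ∈ K, ∃ l : ℝ, 0 ≤ l ∧ d = l • (y - x)},
      ‖(-(g x) - ContinuousLinearMap.adjoint A v
          - ContinuousLinearMap.adjoint A (A x - b)) - p‖ ≤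
        ‖(-(g x) - ContinuousLinearMap.adjoint A v
          - ContinuousLinearMap.adjoint A (A x - b)) - u‖)
    (hzero : ⟪x - xs, p⟫ + ⟪v - vs, A x - b⟫ = 0) :
    A x = b ∧ f x = f xs :=
  lyapunov_derivative_zero_implies_optimal_general n m K hK f hf g hg A b L hL xs vs hxs hfeas
    hsaddle x hx v p hpT hpmin hzero
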